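/- (Finite symmetry generated by Q(k).) Let k : ℝ → ℝ be smooth and ε ∈ ℝ. Suppose the pair (ψ, w) solves DS. Then the pair (ψ̃, w̃) defined by ψ̃(t,x,y,z) = exp(i·(ε·k'(t)·z/2 − ε²·k(t)·k'(t)/4)) · ψ(t, x, y, z − ε·k(t)) and w̃(t,x,y,z) = w(t, x, y, z − ε·k(t)) − ε·k''(t)·z/2 + ε²·k(t)·k''(t)/4 also solves DS. -/

import Mathlib

noncomputable section

/-- `ψ : ℝ⁴ → ℂ` (curried as a function of `t x y z`) is smooth. -/
def SmoothC (ψ : ℝ → ℝ → ℝ → ℝ → ℂ) : Prop :=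
  ContDiff ℝ (⊤ : ℕ∞) fun p : ℝ × ℝ × ℝ × ℝ => ψ p.1 p.2.1 p.2.2.1 p.2.2.2

/-- `w : ℝ⁴ → ℝ` (curried as a function of `t x y z`) is smooth. -/
def SmoothR (w : ℝ → ℝ → ℝ → ℝ → ℝ) : Prop :=
  ContDiff ℝ (⊤ : ℕ∞) fun p : ℝ × ℝ × ℝ × ℝ => w p.1 p.2.1 p.2.2.1 p.2.2.2

/-- The pair `(ψ, w)` satisfies both equations of the (3+1)-dimensional
Davey–Stewartson system
`i·ψ_t + ψ_xx + a₁ψ_yy + ψ_zz = a₂|ψ|²ψ + ψw`,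
`w_xx + b₁w_yy + w_zz = b₂(|ψ|²)_yy`
at the point `(t,x,y,z)`. -/
def SolvesDSAt (a₁ a₂ b₁ b₂ : ℝ) (ψ : ℝ → ℝ → ℝ → ℝ → ℂ) (w : ℝ → ℝ → ℝ → ℝ → ℝ)
    (t x y z : ℝ) : Prop :=
  (Complex.I * deriv (fun t' => ψ t' x y z) t
      + deriv (deriv (fun x' => ψ t x' y z)) x
      + (a₁ : ℂ) * deriv (deriv (fun y' => ψ t x y' z)) y
      + deriv (deriv (fun z' => ψ t x y z')) z
    = (a₂ : ℂ) * ((‖ψ t x y z‖ : ℝ) : ℂ) ^ 2 * ψ t x y z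
      + ψ t x y z * (w t x y z : ℂ)) ∧
  (deriv (deriv (fun x' => w t x' y z)) x
      + b₁ * deriv (deriv (fun y' => w t x y' z)) y
      + deriv (deriv (fun z' => w t x y z')) z
    = b₂ * deriv (deriv (fun y' => ‖ψ t x y' z‖ ^ 2)) y)

/-- The pair `(ψ, w)` solves the (3+1)-dimensional Davey–Stewartson system
at every point of `ℝ⁴`. -/
def SolvesDS (a₁ a₂ b₁ b₂ : ℝ) (ψ : ℝ → ℝ → ℝ → ℝ → ℂ) (w : ℝ → ℝ → ℝ → ℝ → ℝ) : Prop :=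
  ∀ t x y z : ℝ, SolvesDSAt a₁ a₂ b₁ b₂ ψ w t x y z

open Complex

private lemma abs_exp_I_mul_real (r : ℝ) : ‖Complex.exp (Complex.I * r)‖ = 1 := by
  rw [Complex.norm_exp]; simp

/-- The 4-variable function underlying a curried function. -/
def FF {E : Type*} (ψ : ℝ → ℝ → ℝ → ℝ → E) : ℝ × ℝ × ℝ × ℝ → E :=
  fun p => ψ p.1 p.2.1 p.2.2.1 p.2.2.2

section slices

variable {E : Type*} [NormedAddCommGroup E] [NormedSpace ℝ E]

private lemma fderiv_split (F : ℝ × ℝ × ℝ × ℝ → E) (p : ℝ × ℝ × ℝ × ℝ) (d : ℝ) :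
    fderiv ℝ F p (1, 0, 0, d)
      = fderiv ℝ F p (1, 0, 0, 0) + d • fderiv ℝ F p (0, 0, 0, 1) := by
  have h : ((1:ℝ), (0:ℝ), (0:ℝ), d) = (1, 0, 0, 0) + d • ((0:ℝ), (0:ℝ), (0:ℝ), (1:ℝ)) := by
    simp [Prod.ext_iff]
  rw [h, map_add, map_smul]

variable {ψ : ℝ → ℝ → ℝ → ℝ → E}

private lemma psi_hasDerivAt_t
    (hψ : ContDiff ℝ (⊤ : ℕ∞) (FF ψ)) (t x y z : ℝ) :
    HasDerivAt (fun t' => ψ t' x y z) (fderiv ℝ (FF ψ) (t, x, y, z) (1, 0, 0, 0)) t := by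
  have h := ((hψ.differentiable (by simp) (t, x, y, z)).hasFDerivAt).comp_hasDerivAt t
    ((hasDerivAt_id t).prodMk ((hasDerivAt_const t x).prodMk
      ((hasDerivAt_const t y).prodMk (hasDerivAt_const t z))))
  exact h

private lemma psi_hasDerivAt_z
    (hψ : ContDiff ℝ (⊤ : ℕ∞) (FF ψ)) (t x y z : ℝ) :
    HasDerivAt (fun z' => ψ t x y z') (fderiv ℝ (FF ψ) (t, x, y, z) (0, 0, 0, 1)) z := by
  have h := ((hψ.differentiable (by simp) (t, x, y, z)).hasFDerivAt).comp_hasDerivAt z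
    ((hasDerivAt_const z t).prodMk ((hasDerivAt_const z x).prodMk
      ((hasDerivAt_const z y).prodMk (hasDerivAt_id z))))
  exact h

private lemma psi_contDiff_slice_z
    (hψ : ContDiff ℝ (⊤ : ℕ∞) (FF ψ)) (t x y : ℝ) :
    ContDiff ℝ (⊤ : ℕ∞) (fun z' => ψ t x y z') :=
  hψ.comp (contDiff_const.prodMk (contDiff_const.prodMk (contDiff_const.prodMk contDiff_id)))

private lemma psi_hasDerivAt_moving
    (hψ : ContDiff ℝ (⊤ : ℕ∞) (FF ψ)) {k : ℝ → ℝ} (hk : Differentiable ℝ k)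
    (ε t x y z : ℝ) :
    HasDerivAt (fun u => ψ u x y (z - ε * k u))
      (fderiv ℝ (FF ψ) (t, x, y, z - ε * k t) (1, 0, 0, 0)
        + (-(ε * deriv k t)) • fderiv ℝ (FF ψ) (t, x, y, z - ε * k t) (0, 0, 0, 1)) t := by
  have hc : HasDerivAt (fun u => z - ε * k u) (-(ε * deriv k t)) t :=
    HasDerivAt.const_sub z (((hk t).hasDerivAt).const_mul ε)
  have hcurve : HasDerivAt (fun u => (u, x, y, z - ε * k u))
      ((1:ℝ), (0:ℝ), (0:ℝ), -(ε * deriv k t)) t :=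
    (hasDerivAt_id t).prodMk ((hasDerivAt_const t x).prodMk ((hasDerivAt_const t y).prodMk hc))
  have h := ((hψ.differentiable (by simp)
      (t, x, y, z - ε * k t)).hasFDerivAt).comp_hasDerivAt t hcurve
  rw [fderiv_split] at h
  exact h

end slices

/-- Finite symmetry generated by `Q(k)`. -/
theorem stmt14 (a₁ a₂ b₁ b₂ : ℝ) (ha₁ : a₁ ≠ 0) (ha₂ : a₂ ≠ 0) (hb₁ : b₁ ≠ 0) (hb₂ : b₂ ≠ 0)
    (ψ : ℝ → ℝ → ℝ → ℝ → ℂ) (w : ℝ → ℝ → ℝ → ℝ → ℝ)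
    (hψ : SmoothC ψ) (hw : SmoothR w)
    (hsol : SolvesDS a₁ a₂ b₁ b₂ ψ w)
    (k : ℝ → ℝ) (hk : ContDiff ℝ (⊤ : ℕ∞) k) (ε : ℝ) :
    SolvesDS a₁ a₂ b₁ b₂
      (fun t x y z =>
        Complex.exp (Complex.I * ((ε * deriv k t * z / 2 - ε ^ 2 * k t * deriv k t / 4 : ℝ) : ℂ)) *
          ψ t x y (z - ε * k t))
      (fun t x y z =>
        w t x y (z - ε * k t) - ε * deriv (deriv k) t * z / 2
          + ε ^ 2 * k t * deriv (deriv k) t / 4) := by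
  have hone : ((⊤ : ℕ∞) : WithTop ℕ∞) ≠ 0 := by simp
  have hF : ContDiff ℝ (⊤ : ℕ∞) (FF ψ) := hψ
  have hFw : ContDiff ℝ (⊤ : ℕ∞) (FF w) := hw
  have hkd : Differentiable ℝ k := hk.differentiable hone
  have hk' : ContDiff ℝ (⊤ : ℕ∞) (deriv k) := (contDiff_infty_iff_deriv.mp hk).2
  have hk'd : Differentiable ℝ (deriv k) := hk'.differentiable hone
  unfold SolvesDS SolvesDSAt
  intro t x y z
  -- abbreviations (purely for readability of this script; everything is literal)
  constructor
  · -- first equation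
    -- x-slice
    have ex : deriv (deriv (fun x' =>
        Complex.exp (Complex.I * ((ε * deriv k t * z / 2 - ε ^ 2 * k t * deriv k t / 4 : ℝ) : ℂ)) *
          ψ t x' y (z - ε * k t))) x
        = Complex.exp (Complex.I * ((ε * deriv k t * z / 2 - ε ^ 2 * k t * deriv k t / 4 : ℝ) : ℂ)) *
          deriv (deriv (fun x' => ψ t x' y (z - ε * k t))) x := by
      rw [deriv_const_mul_field', deriv_const_mul_field]
    have ey : deriv (deriv (fun y' =>
        Complex.exp (Complex.I * ((ε * deriv k t * z / 2 - ε ^ 2 * k t * deriv k t / 4 : ℝ) : ℂ)) *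
          ψ t x y' (z - ε * k t))) y
        = Complex.exp (Complex.I * ((ε * deriv k t * z / 2 - ε ^ 2 * k t * deriv k t / 4 : ℝ) : ℂ)) *
          deriv (deriv (fun y' => ψ t x y' (z - ε * k t))) y := by
      rw [deriv_const_mul_field', deriv_const_mul_field]
    -- z-slice
    have hZsm : ContDiff ℝ (⊤ : ℕ∞) (fun z' => ψ t x y z') := psi_contDiff_slice_z hF t x y
    have hZ1 : Differentiable ℝ (deriv (fun z' => ψ t x y z')) :=
      ((contDiff_infty_iff_deriv.mp hZsm).2).differentiable hone
    have hθz : ∀ u : ℝ, HasDerivAt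
        (fun z' : ℝ => ε * deriv k t * z' / 2 - ε ^ 2 * k t * deriv k t / 4)
        (ε * deriv k t / 2) u := by
      intro u
      simpa using (((hasDerivAt_id u).const_mul (ε * deriv k t)).div_const 2).sub_const
        (ε ^ 2 * k t * deriv k t / 4)
    have hEz : ∀ u : ℝ, HasDerivAt
        (fun z' : ℝ => Complex.exp (Complex.I *
          ((ε * deriv k t * z' / 2 - ε ^ 2 * k t * deriv k t / 4 : ℝ) : ℂ)))
        (Complex.exp (Complex.I *
          ((ε * deriv k t * u / 2 - ε ^ 2 * k t * deriv k t / 4 : ℝ) : ℂ)) *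
          (Complex.I * ((ε * deriv k t / 2 : ℝ) : ℂ))) u :=
      fun u => (((hθz u).ofReal_comp).const_mul Complex.I).cexp
    have hZmv : ∀ u : ℝ, HasDerivAt (fun z' => ψ t x y (z' - ε * k t))
        (deriv (fun z' => ψ t x y z') (u - ε * k t)) u := by
      intro u
      have hsh : HasDerivAt (fun z' : ℝ => z' - ε * k t) 1 u := by
        simpa using (hasDerivAt_id u).sub_const (ε * k t)
      simpa [Function.comp_def] using ((hZsm.differentiable hone (u - ε * k t)).hasDerivAt).scomp u hsh
    have hG : ∀ u : ℝ, HasDerivAt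
        (fun z' => Complex.exp (Complex.I *
            ((ε * deriv k t * z' / 2 - ε ^ 2 * k t * deriv k t / 4 : ℝ) : ℂ)) *
          ψ t x y (z' - ε * k t))
        (Complex.exp (Complex.I *
            ((ε * deriv k t * u / 2 - ε ^ 2 * k t * deriv k t / 4 : ℝ) : ℂ)) *
            (Complex.I * ((ε * deriv k t / 2 : ℝ) : ℂ)) * ψ t x y (u - ε * k t)
          + Complex.exp (Complex.I *
            ((ε * deriv k t * u / 2 - ε ^ 2 * k t * deriv k t / 4 : ℝ) : ℂ)) *
            deriv (fun z' => ψ t x y z') (u - ε * k t)) u :=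
      fun u => (hEz u).mul (hZmv u)
    have hd1 : deriv (fun z' => Complex.exp (Complex.I *
            ((ε * deriv k t * z' / 2 - ε ^ 2 * k t * deriv k t / 4 : ℝ) : ℂ)) *
          ψ t x y (z' - ε * k t))
        = fun u => Complex.exp (Complex.I *
            ((ε * deriv k t * u / 2 - ε ^ 2 * k t * deriv k t / 4 : ℝ) : ℂ)) *
            (Complex.I * ((ε * deriv k t / 2 : ℝ) : ℂ)) * ψ t x y (u - ε * k t)
          + Complex.exp (Complex.I *
            ((ε * deriv k t * u / 2 - ε ^ 2 * k t * deriv k t / 4 : ℝ) : ℂ)) *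
            deriv (fun z' => ψ t x y z') (u - ε * k t) :=
      funext fun u => (hG u).deriv
    have hZ2 : HasDerivAt (fun u => deriv (fun z' => ψ t x y z') (u - ε * k t))
        (deriv (deriv (fun z' => ψ t x y z')) (z - ε * k t)) z := by
      have hsh : HasDerivAt (fun z' : ℝ => z' - ε * k t) 1 z := by
        simpa using (hasDerivAt_id z).sub_const (ε * k t)
      simpa [Function.comp_def] using ((hZ1 (z - ε * k t)).hasDerivAt).scomp z hsh
    have h2a : HasDerivAt (fun u => Complex.exp (Complex.I *
            ((ε * deriv k t * u / 2 - ε ^ 2 * k t * deriv k t / 4 : ℝ) : ℂ)) *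
            (Complex.I * ((ε * deriv k t / 2 : ℝ) : ℂ)) * ψ t x y (u - ε * k t))
        (Complex.exp (Complex.I *
            ((ε * deriv k t * z / 2 - ε ^ 2 * k t * deriv k t / 4 : ℝ) : ℂ)) *
            (Complex.I * ((ε * deriv k t / 2 : ℝ) : ℂ)) * (Complex.I * ((ε * deriv k t / 2 : ℝ) : ℂ))
            * ψ t x y (z - ε * k t)
          + Complex.exp (Complex.I *
            ((ε * deriv k t * z / 2 - ε ^ 2 * k t * deriv k t / 4 : ℝ) : ℂ)) *
            (Complex.I * ((ε * deriv k t / 2 : ℝ) : ℂ)) *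
            deriv (fun z' => ψ t x y z') (z - ε * k t)) z :=
      ((hEz z).mul_const (Complex.I * ((ε * deriv k t / 2 : ℝ) : ℂ))).mul (hZmv z)
    have h2b : HasDerivAt (fun u => Complex.exp (Complex.I *
            ((ε * deriv k t * u / 2 - ε ^ 2 * k t * deriv k t / 4 : ℝ) : ℂ)) *
            deriv (fun z' => ψ t x y z') (u - ε * k t))
        (Complex.exp (Complex.I *
            ((ε * deriv k t * z / 2 - ε ^ 2 * k t * deriv k t / 4 : ℝ) : ℂ)) *
            (Complex.I * ((ε * deriv k t / 2 : ℝ) : ℂ)) *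
            deriv (fun z' => ψ t x y z') (z - ε * k t)
          + Complex.exp (Complex.I *
            ((ε * deriv k t * z / 2 - ε ^ 2 * k t * deriv k t / 4 : ℝ) : ℂ)) *
            deriv (deriv (fun z' => ψ t x y z')) (z - ε * k t)) z :=
      (hEz z).mul hZ2
    have e4 : deriv (deriv (fun z' => Complex.exp (Complex.I *
            ((ε * deriv k t * z' / 2 - ε ^ 2 * k t * deriv k t / 4 : ℝ) : ℂ)) *
          ψ t x y (z' - ε * k t))) z
        = (Complex.exp (Complex.I *
            ((ε * deriv k t * z / 2 - ε ^ 2 * k t * deriv k t / 4 : ℝ) : ℂ)) *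
            (Complex.I * ((ε * deriv k t / 2 : ℝ) : ℂ)) * (Complex.I * ((ε * deriv k t / 2 : ℝ) : ℂ))
            * ψ t x y (z - ε * k t)
          + Complex.exp (Complex.I *
            ((ε * deriv k t * z / 2 - ε ^ 2 * k t * deriv k t / 4 : ℝ) : ℂ)) *
            (Complex.I * ((ε * deriv k t / 2 : ℝ) : ℂ)) *
            deriv (fun z' => ψ t x y z') (z - ε * k t))
          + (Complex.exp (Complex.I *
            ((ε * deriv k t * z / 2 - ε ^ 2 * k t * deriv k t / 4 : ℝ) : ℂ)) *
            (Complex.I * ((ε * deriv k t / 2 : ℝ) : ℂ)) *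
            deriv (fun z' => ψ t x y z') (z - ε * k t)
          + Complex.exp (Complex.I *
            ((ε * deriv k t * z / 2 - ε ^ 2 * k t * deriv k t / 4 : ℝ) : ℂ)) *
            deriv (deriv (fun z' => ψ t x y z')) (z - ε * k t)) := by
      rw [hd1]
      exact (h2a.add h2b).deriv
    -- t-slice
    have hθt : HasDerivAt
        (fun t' : ℝ => ε * deriv k t' * z / 2 - ε ^ 2 * k t' * deriv k t' / 4)
        (ε * deriv (deriv k) t * z / 2
          - (ε ^ 2 * deriv k t * deriv k t + ε ^ 2 * k t * deriv (deriv k) t) / 4) t := by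
      have h1 : HasDerivAt (fun t' : ℝ => ε * deriv k t' * z / 2)
          (ε * deriv (deriv k) t * z / 2) t :=
        ((((hk'd t).hasDerivAt).const_mul ε).mul_const z).div_const 2
      have h2 : HasDerivAt (fun t' : ℝ => ε ^ 2 * k t' * deriv k t' / 4)
          ((ε ^ 2 * deriv k t * deriv k t + ε ^ 2 * k t * deriv (deriv k) t) / 4) t :=
        ((((hkd t).hasDerivAt).const_mul (ε ^ 2)).mul ((hk'd t).hasDerivAt)).div_const 4
      exact h1.sub h2
    have hEt : HasDerivAt
        (fun t' : ℝ => Complex.exp (Complex.I *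
          ((ε * deriv k t' * z / 2 - ε ^ 2 * k t' * deriv k t' / 4 : ℝ) : ℂ)))
        (Complex.exp (Complex.I *
          ((ε * deriv k t * z / 2 - ε ^ 2 * k t * deriv k t / 4 : ℝ) : ℂ)) *
          (Complex.I * ((ε * deriv (deriv k) t * z / 2
            - (ε ^ 2 * deriv k t * deriv k t + ε ^ 2 * k t * deriv (deriv k) t) / 4 : ℝ) : ℂ))) t :=
      ((hθt.ofReal_comp).const_mul Complex.I).cexp
    have hB := psi_hasDerivAt_moving hF hkd ε t x y z
    have et : deriv (fun t' => Complex.exp (Complex.I *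
          ((ε * deriv k t' * z / 2 - ε ^ 2 * k t' * deriv k t' / 4 : ℝ) : ℂ)) *
          ψ t' x y (z - ε * k t')) t
        = Complex.exp (Complex.I *
            ((ε * deriv k t * z / 2 - ε ^ 2 * k t * deriv k t / 4 : ℝ) : ℂ)) *
          (Complex.I * ((ε * deriv (deriv k) t * z / 2
            - (ε ^ 2 * deriv k t * deriv k t + ε ^ 2 * k t * deriv (deriv k) t) / 4 : ℝ) : ℂ)) *
          ψ t x y (z - ε * k t)
        + Complex.exp (Complex.I *
            ((ε * deriv k t * z / 2 - ε ^ 2 * k t * deriv k t / 4 : ℝ) : ℂ)) *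
          (fderiv ℝ (FF ψ) (t, x, y, z - ε * k t) (1, 0, 0, 0)
            + (-(ε * deriv k t)) • fderiv ℝ (FF ψ) (t, x, y, z - ε * k t) (0, 0, 0, 1)) :=
      (hEt.mul hB).deriv
    have psit : deriv (fun t' => ψ t' x y (z - ε * k t)) t
        = fderiv ℝ (FF ψ) (t, x, y, z - ε * k t) (1, 0, 0, 0) :=
      (psi_hasDerivAt_t hF t x y (z - ε * k t)).deriv
    have psiz : deriv (fun z' => ψ t x y z') (z - ε * k t)
        = fderiv ℝ (FF ψ) (t, x, y, z - ε * k t) (0, 0, 0, 1) :=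
      (psi_hasDerivAt_z hF t x y (z - ε * k t)).deriv
    have habs : ‖Complex.exp (Complex.I *
          ((ε * deriv k t * z / 2 - ε ^ 2 * k t * deriv k t / 4 : ℝ) : ℂ)) *
          ψ t x y (z - ε * k t)‖
        = ‖ψ t x y (z - ε * k t)‖ := by
      rw [norm_mul, abs_exp_I_mul_real, one_mul]
    have hsol1 := (hsol t x y (z - ε * k t)).1
    rw [psit] at hsol1
    rw [et, ex, ey, e4, habs, psiz, Complex.real_smul]
    push_cast
    push_cast at hsol1
    linear_combination (Complex.exp (Complex.I * ((ε : ℂ) * ((deriv k t : ℝ) : ℂ) * (z : ℂ) / 2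
        - (ε : ℂ) ^ 2 * ((k t : ℝ) : ℂ) * ((deriv k t : ℝ) : ℂ) / 4))) * hsol1
      + (Complex.exp (Complex.I * ((ε : ℂ) * ((deriv k t : ℝ) : ℂ) * (z : ℂ) / 2
          - (ε : ℂ) ^ 2 * ((k t : ℝ) : ℂ) * ((deriv k t : ℝ) : ℂ) / 4)) *
          ψ t x y (z - ε * k t) *
          ((ε : ℂ) * ((deriv (deriv k) t : ℝ) : ℂ) * (z : ℂ) / 2
            - (ε : ℂ) ^ 2 * ((k t : ℝ) : ℂ) * ((deriv (deriv k) t : ℝ) : ℂ) / 4)) * Complex.I_sq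
  · -- second equation
    have hWsm : ContDiff ℝ (⊤ : ℕ∞) (fun z' => w t x y z') := psi_contDiff_slice_z hFw t x y
    have ewx : deriv (fun x' => w t x' y (z - ε * k t) - ε * deriv (deriv k) t * z / 2
          + ε ^ 2 * k t * deriv (deriv k) t / 4)
        = deriv (fun x' => w t x' y (z - ε * k t)) :=
      funext fun u => by rw [deriv_add_const, deriv_sub_const]
    have ewy : deriv (fun y' => w t x y' (z - ε * k t) - ε * deriv (deriv k) t * z / 2
          + ε ^ 2 * k t * deriv (deriv k) t / 4)
        = deriv (fun y' => w t x y' (z - ε * k t)) :=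
      funext fun u => by rw [deriv_add_const, deriv_sub_const]
    have hWmv : ∀ u : ℝ, HasDerivAt
        (fun z' => w t x y (z' - ε * k t) - ε * deriv (deriv k) t * z' / 2
          + ε ^ 2 * k t * deriv (deriv k) t / 4)
        (deriv (fun z' => w t x y z') (u - ε * k t) - ε * deriv (deriv k) t / 2) u := by
      intro u
      have ha : HasDerivAt (fun z' => w t x y (z' - ε * k t))
          (deriv (fun z' => w t x y z') (u - ε * k t)) u := by
        have hsh : HasDerivAt (fun z' : ℝ => z' - ε * k t) 1 u := by
          simpa using (hasDerivAt_id u).sub_const (ε * k t)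
        simpa [Function.comp_def] using ((hWsm.differentiable hone (u - ε * k t)).hasDerivAt).scomp u hsh
      have hb : HasDerivAt (fun z' : ℝ => ε * deriv (deriv k) t * z' / 2)
          (ε * deriv (deriv k) t / 2) u := by
        simpa using (((hasDerivAt_id u).const_mul (ε * deriv (deriv k) t)).div_const 2)
      exact (ha.sub hb).add_const _
    have ewz : deriv (fun z' => w t x y (z' - ε * k t) - ε * deriv (deriv k) t * z' / 2
          + ε ^ 2 * k t * deriv (deriv k) t / 4)
        = fun u => deriv (fun z' => w t x y z') (u - ε * k t) - ε * deriv (deriv k) t / 2 :=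
      funext fun u => (hWmv u).deriv
    have eabs : (fun y' => ‖Complex.exp (Complex.I *
          ((ε * deriv k t * z / 2 - ε ^ 2 * k t * deriv k t / 4 : ℝ) : ℂ)) *
          ψ t x y' (z - ε * k t)‖ ^ 2)
        = fun y' => ‖ψ t x y' (z - ε * k t)‖ ^ 2 :=
      funext fun u => by rw [norm_mul, abs_exp_I_mul_real, one_mul]
    rw [ewx, ewy, ewz, eabs]
    have : deriv (fun u => deriv (fun z' => w t x y z') (u - ε * k t)
          - ε * deriv (deriv k) t / 2) z
        = deriv (deriv (fun z' => w t x y z')) (z - ε * k t) := by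
      rw [deriv_sub_const, deriv_comp_sub_const]
    rw [this]
    exact (hsol t x y (z - ε * k t)).2

end
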